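/- arXiv:1907.02119 — 9 statements merged into one kernel-verified Lean document; each statement's English description precedes it below -/
import Mathlib

section
/- Let M be a right R-module and m1, m2 ∈ M with m1 regular. Then m1 ≤⁻ m2 if and only if there exist an idempotent f ∈ S and an idempotent a ∈ R such that l_S(m1) = l_S(f), r_R(m1) = r_R(a), f(m1) = f(m2), and m1·a = m2·a. -/
/- A right `R`-module is encoded as a left `Rᵐᵒᵖ`-module: `m · r = MulOpposite.op r • m`.
Likewise `R` itself is a right `R`-module via `op r • a = a * r`, so the dual
`M* = Hom_R(M, R)` is `M →ₗ[Rᵐᵒᵖ] R` and `S = End_R(M)` is `Module.End Rᵐᵒᵖ M`. -/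

open MulOpposite

/-- The minus relation `m₁ ≤⁻ m₂` on a right `R`-module `M`: there exists `φ ∈ M*`
with `m₁ = m₁·φ(m₁)`, `m₁·φ(x) = m₂·φ(x)` for all `x ∈ M`, and `φ(m₁) = φ(m₂)`. -/
def MinusLE (R : Type*) [Ring R] {M : Type*} [AddCommGroup M] [Module Rᵐᵒᵖ M]
    (m₁ m₂ : M) : Prop :=
  ∃ φ : M →ₗ[Rᵐᵒᵖ] R,
    m₁ = op (φ m₁) • m₁ ∧ (∀ x : M, op (φ x) • m₁ = op (φ x) • m₂) ∧ φ m₁ = φ m₂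

/-- An element `m` of a right `R`-module is (Zelmanowitz) regular if `m = m·φ(m)`
for some `φ ∈ M*`. -/
def IsRegularElem (R : Type*) [Ring R] {M : Type*} [AddCommGroup M] [Module Rᵐᵒᵖ M]
    (m : M) : Prop :=
  ∃ φ : M →ₗ[Rᵐᵒᵖ] R, m = op (φ m) • m

/-! If `φ` witnesses `m₁ ≤⁻ m₂`, the idempotents are `f = m₁·φ(-) ∈ S` and `a = φ(m₁) ∈ R`; both
annihilator conditions come from `m₁ = m₁·a = f(m₁)`. Conversely, applying the annihilator
conditions to `1 - f` and `1 - a` gives `f(m₁) = m₁` and `m₁·a = m₁`, and then, if `ψ` witnesses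
the regularity of `m₁`, `φ = a·ψ(f(-))` witnesses `m₁ ≤⁻ m₂`. -/

theorem IsIdempotentElem.smul_eq_self_of_forall {S N : Type*} [Ring S] [AddCommGroup N]
    [Module S N] {e : S} {n : N} (he : IsIdempotentElem e)
    (h : ∀ g : S, g * e = 0 → g • n = 0) : e • n = n := by
  have := h (1 - e) he.one_sub_mul_self
  rwa [sub_smul, one_smul, sub_eq_zero, eq_comm] at this

section

variable {R M : Type*} [Ring R] [AddCommGroup M] [Module Rᵐᵒᵖ M]

def dualSmulRight (φ : M →ₗ[Rᵐᵒᵖ] R) (m : M) : Module.End Rᵐᵒᵖ M :=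
  LinearMap.smulRight ((opLinearEquiv Rᵐᵒᵖ).toLinearMap ∘ₗ φ) m

@[simp]
theorem dualSmulRight_apply (φ : M →ₗ[Rᵐᵒᵖ] R) (m x : M) :
    dualSmulRight φ m x = op (φ x) • m :=
  rfl

@[simp]
theorem dualSmulRight_zero (φ : M →ₗ[Rᵐᵒᵖ] R) : dualSmulRight φ (0 : M) = 0 := by
  ext x
  simp

theorem mul_dualSmulRight (g : Module.End Rᵐᵒᵖ M) (φ : M →ₗ[Rᵐᵒᵖ] R) (m : M) :
    g * dualSmulRight φ m = dualSmulRight φ (g m) := by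
  ext x
  simp

variable {φ : M →ₗ[Rᵐᵒᵖ] R} {m : M}

theorem isIdempotentElem_apply_self (hm : m = op (φ m) • m) : IsIdempotentElem (φ m) :=
  calc φ m * φ m = φ (op (φ m) • m) := by rw [map_smul, op_smul_eq_mul]
    _ = φ m := by rw [← hm]

theorem isIdempotentElem_dualSmulRight (hm : m = op (φ m) • m) :
    IsIdempotentElem (dualSmulRight φ m) := by
  rw [IsIdempotentElem, mul_dualSmulRight, dualSmulRight_apply, ← hm]

theorem mul_dualSmulRight_eq_zero_iff (hm : m = op (φ m) • m) (g : Module.End Rᵐᵒᵖ M) :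
    g * dualSmulRight φ m = 0 ↔ g m = 0 := by
  constructor
  · intro h
    calc g m = (g * dualSmulRight φ m) m := by rw [Module.End.mul_apply, dualSmulRight_apply, ← hm]
      _ = 0 := by rw [h, LinearMap.zero_apply]
  · intro h
    rw [mul_dualSmulRight, h, dualSmulRight_zero]

theorem op_smul_eq_zero_iff_apply_mul_eq_zero (hm : m = op (φ m) • m) (r : R) :
    op r • m = 0 ↔ φ m * r = 0 := by
  have hφ : φ (op r • m) = φ m * r := by rw [map_smul, op_smul_eq_mul]
  constructor
  · intro h
    rw [← hφ, h, map_zero]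
  · intro h
    rw [hm, smul_smul, ← op_mul, h, op_zero, zero_smul]

theorem IsRegularElem.minusLE_of_fixed {m₁ m₂ : M} (hreg : IsRegularElem R m₁)
    {f : Module.End Rᵐᵒᵖ M} {a : R} (hf₁ : f m₁ = m₁) (ha₁ : op a • m₁ = m₁)
    (hf : f m₁ = f m₂) (ha : op a • m₁ = op a • m₂) : MinusLE R m₁ m₂ := by
  obtain ⟨ψ, hψ⟩ := hreg
  refine ⟨a • ψ ∘ₗ f, ?_, fun x => ?_, ?_⟩
  · rw [LinearMap.smul_apply, LinearMap.comp_apply, smul_eq_mul, op_mul, mul_smul, ha₁, hf₁]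
    exact hψ
  · rw [LinearMap.smul_apply, smul_eq_mul, op_mul, mul_smul, mul_smul, ha]
  · rw [LinearMap.smul_apply, LinearMap.smul_apply, LinearMap.comp_apply, LinearMap.comp_apply, hf]

end

/-- For `m₁` regular, `m₁ ≤⁻ m₂` iff there are idempotents `f ∈ S`,
`a ∈ R` with `l_S(m₁) = l_S(f)`, `r_R(m₁) = r_R(a)`, `f(m₁) = f(m₂)`, `m₁·a = m₂·a`. -/
theorem minusLE_iff_exists_idempotents (R : Type*) [Ring R] {M : Type*} [AddCommGroup M]
    [Module Rᵐᵒᵖ M] (m₁ m₂ : M) (hreg : IsRegularElem R m₁) :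
    MinusLE R m₁ m₂ ↔
      ∃ (f : Module.End Rᵐᵒᵖ M) (a : R), f * f = f ∧ a * a = a ∧
        {g : Module.End Rᵐᵒᵖ M | g m₁ = 0} = {g : Module.End Rᵐᵒᵖ M | g * f = 0} ∧
        {r : R | op r • m₁ = (0 : M)} = {x : R | a * x = 0} ∧
        f m₁ = f m₂ ∧ op a • m₁ = op a • m₂ := by
  constructor
  · rintro ⟨φ, hm, hφ, hφm⟩
    refine ⟨dualSmulRight φ m₁, φ m₁, isIdempotentElem_dualSmulRight hm,
      isIdempotentElem_apply_self hm, Set.ext fun g => (mul_dualSmulRight_eq_zero_iff hm g).symm,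
      Set.ext (op_smul_eq_zero_iff_apply_mul_eq_zero hm), by simp [hφm], hφ m₁⟩
  · rintro ⟨f, a, hf, ha, hker, hann, hfm, ham⟩
    have hf₁ : f m₁ = m₁ := IsIdempotentElem.smul_eq_self_of_forall hf fun g hg =>
      (Set.ext_iff.mp hker g).mpr hg
    have ha₁ : op a • m₁ = m₁ := IsIdempotentElem.smul_eq_self_of_forall (congrArg op ha)
      fun g hg => (Set.ext_iff.mp hann g.unop).mpr (congrArg unop hg)
    exact hreg.minusLE_of_fixed hf₁ ha₁ hfm ham
end

section
/- Let M be a regular right R-module. Then the minus relation ≤⁻ is a partial order on M: it is reflexive, antisymmetric, and transitive. -/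
/- A right `R`-module is encoded as a left `Rᵐᵒᵖ`-module: `m · r = MulOpposite.op r • m`.
Likewise `R` itself is a right `R`-module via `op r • a = a * r`, so the dual
`M* = Hom_R(M, R)` is `M →ₗ[Rᵐᵒᵖ] R` and `S = End_R(M)` is `Module.End Rᵐᵒᵖ M`. -/

open MulOpposite

/-!
Both axioms beyond reflexivity come from one computation: if `m₁ = m₂·r` and `m₂ = m₂·ψ(m₂)`,
then `m₂·ψ(m₁) = m₂·ψ(m₂)·r = m₁`. For transitivity, when `φ` witnesses `m₁ ≤⁻ m₂` and `ψ`
witnesses `m₂ ≤⁻ m₃`, the functional `x ↦ ψ(m₁)·ψ(x)` witnesses `m₁ ≤⁻ m₃`: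
`e = ψ(m₁)` is an idempotent fixing `m₁`, and `m₂·e = m₁` transports `ψ`'s second axiom to `m₁`.
-/

section

variable {R : Type*} [Ring R] {M : Type*} [AddCommGroup M] [Module Rᵐᵒᵖ M]

theorem LinearMap.map_op_smul (φ : M →ₗ[Rᵐᵒᵖ] R) (r : R) (m : M) :
    φ (op r • m) = φ m * r := by
  rw [map_smul, op_smul_eq_mul]

theorem op_map_smul_eq_of_eq_op_smul {ψ : M →ₗ[Rᵐᵒᵖ] R} {m n : M} {r : R}
    (hm : m = op (ψ m) • m) (hn : n = op r • m) : op (ψ n) • m = n := by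
  rw [hn, ψ.map_op_smul, op_mul, mul_smul, ← hm]

structure IsMinusLEWitness (φ : M →ₗ[Rᵐᵒᵖ] R) (m₁ m₂ : M) : Prop where
  eq_op_smul_self : m₁ = op (φ m₁) • m₁
  op_smul_eq_op_smul : ∀ x : M, op (φ x) • m₁ = op (φ x) • m₂
  map_eq : φ m₁ = φ m₂

theorem minusLE_iff_exists_isMinusLEWitness {m₁ m₂ : M} :
    MinusLE R m₁ m₂ ↔ ∃ φ : M →ₗ[Rᵐᵒᵖ] R, IsMinusLEWitness φ m₁ m₂ :=
  ⟨fun ⟨φ, h₁, h₂, h₃⟩ => ⟨φ, h₁, h₂, h₃⟩, fun ⟨φ, ⟨h₁, h₂, h₃⟩⟩ => ⟨φ, h₁, h₂, h₃⟩⟩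

namespace IsMinusLEWitness

variable {φ ψ : M →ₗ[Rᵐᵒᵖ] R} {m m₁ m₂ m₃ : M}

theorem of_eq_op_smul_self (h : m = op (φ m) • m) : IsMinusLEWitness φ m m :=
  ⟨h, fun _ => rfl, rfl⟩

theorem eq_op_smul_right (hφ : IsMinusLEWitness φ m₁ m₂) : m₁ = op (φ m₁) • m₂ :=
  hφ.op_smul_eq_op_smul m₁ ▸ hφ.eq_op_smul_self

theorem op_smul_eq_op_map_op_smul (hφ : IsMinusLEWitness φ m₁ m₂) (r : R) :
    op r • m₁ = op (φ (op r • m₂)) • m₁ := by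
  rw [φ.map_op_smul, op_mul, mul_smul, ← hφ.map_eq, ← hφ.eq_op_smul_self]

theorem antisymm (hφ : IsMinusLEWitness φ m₁ m₂) (hψ : IsMinusLEWitness ψ m₂ m₁) : m₁ = m₂ :=
  calc m₁ = op (ψ m₁) • m₂ :=
        (op_map_smul_eq_of_eq_op_smul hψ.eq_op_smul_self hφ.eq_op_smul_right).symm
    _ = op (ψ m₂) • m₂ := by rw [hψ.map_eq]
    _ = m₂ := hψ.eq_op_smul_self.symm

theorem trans (hφ : IsMinusLEWitness φ m₁ m₂) (hψ : IsMinusLEWitness ψ m₂ m₃) :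
    IsMinusLEWitness (ψ m₁ • ψ) m₁ m₃ := by
  set e := ψ m₁
  have hm₂e : op e • m₂ = m₁ :=
    op_map_smul_eq_of_eq_op_smul hψ.eq_op_smul_self hφ.eq_op_smul_right
  have hm₁e : op e • m₁ = m₁ := by
    rw [hφ.op_smul_eq_op_map_op_smul, hm₂e, ← hφ.eq_op_smul_self]
  have hm₁ψ : op (ψ m₂) • m₁ = m₁ := by
    rw [hφ.op_smul_eq_op_map_op_smul, ← hψ.eq_op_smul_self, ← hφ.map_eq,
      ← hφ.eq_op_smul_self]
  have he : e * e = e := by rw [← ψ.map_op_smul, hm₁e]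
  refine ⟨?_, fun x => ?_, ?_⟩ <;> simp only [LinearMap.smul_apply, smul_eq_mul]
  · rw [he, hm₁e]
  · rw [op_mul, mul_smul, mul_smul, hm₁e, ← hψ.op_smul_eq_op_smul, hm₂e]
  · rw [he, ← hψ.map_eq, ← ψ.map_op_smul, hm₁ψ]

end IsMinusLEWitness

theorem IsRegularElem.minusLE_refl {m : M} (h : IsRegularElem R m) : MinusLE R m m :=
  let ⟨φ, hφ⟩ := h
  minusLE_iff_exists_isMinusLEWitness.2 ⟨φ, .of_eq_op_smul_self hφ⟩

theorem MinusLE.antisymm {m₁ m₂ : M} (h₁₂ : MinusLE R m₁ m₂) (h₂₁ : MinusLE R m₂ m₁) :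
    m₁ = m₂ := by
  obtain ⟨φ, hφ⟩ := minusLE_iff_exists_isMinusLEWitness.1 h₁₂
  obtain ⟨ψ, hψ⟩ := minusLE_iff_exists_isMinusLEWitness.1 h₂₁
  exact hφ.antisymm hψ

theorem MinusLE.trans {m₁ m₂ m₃ : M} (h₁₂ : MinusLE R m₁ m₂) (h₂₃ : MinusLE R m₂ m₃) :
    MinusLE R m₁ m₃ := by
  obtain ⟨φ, hφ⟩ := minusLE_iff_exists_isMinusLEWitness.1 h₁₂
  obtain ⟨ψ, hψ⟩ := minusLE_iff_exists_isMinusLEWitness.1 h₂₃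
  exact minusLE_iff_exists_isMinusLEWitness.2 ⟨_, hφ.trans hψ⟩

end

/-- On a regular module, the minus relation is a partial order
(reflexive, antisymmetric, and transitive). -/
theorem minusLE_isPartialOrder (R : Type*) [Ring R] {M : Type*} [AddCommGroup M]
    [Module Rᵐᵒᵖ M] (hM : ∀ m : M, IsRegularElem R m) :
    (∀ m : M, MinusLE R m m) ∧
    (∀ m₁ m₂ : M, MinusLE R m₁ m₂ → MinusLE R m₂ m₁ → m₁ = m₂) ∧
    (∀ m₁ m₂ m₃ : M, MinusLE R m₁ m₂ → MinusLE R m₂ m₃ → MinusLE R m₁ m₃) :=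
  ⟨fun m => (hM m).minusLE_refl, fun _ _ => MinusLE.antisymm, fun _ _ _ => MinusLE.trans⟩
end

section
/- Let M be a regular right R-module and suppose m1 ≤⁻ m2 and m2 ≤⁻ m1 for m1, m2 ∈ M. Then m1 = m2. -/
/- A right `R`-module is encoded as a left `Rᵐᵒᵖ`-module: `m · r = MulOpposite.op r • m`.
Likewise `R` itself is a right `R`-module via `op r • a = a * r`, so the dual
`M* = Hom_R(M, R)` is `M →ₗ[Rᵐᵒᵖ] R` and `S = End_R(M)` is `Module.End Rᵐᵒᵖ M`. -/

open MulOpposite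

section

variable {R : Type*} [Ring R] {M : Type*} [AddCommGroup M] [Module Rᵐᵒᵖ M]

theorem MinusLE.exists_eq_op_smul {m₁ m₂ : M} (h : MinusLE R m₁ m₂) :
    ∃ φ : M →ₗ[Rᵐᵒᵖ] R, m₁ = op (φ m₁) • m₂ ∧ φ m₁ = φ m₂ := by
  obtain ⟨φ, hidem, hsmul, hval⟩ := h
  exact ⟨φ, hidem.trans (hsmul m₁), hval⟩

/- From `m₁ = m₂·a` we get `φ(m₂) = φ(m₁) = φ(m₂)·a`, hence
`m₂ = m₁·φ(m₂) = m₁·φ(m₂)·a = m₂·a = m₁`. -/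
theorem eq_of_eq_op_smul_of_eq_op_smul {m₁ m₂ : M} {a : R} (φ : M →ₗ[Rᵐᵒᵖ] R)
    (h₁ : m₁ = op a • m₂) (h₂ : m₂ = op (φ m₂) • m₁) (hφ : φ m₁ = φ m₂) : m₁ = m₂ := by
  have hfix : φ m₂ * a = φ m₂ := by
    rw [← op_smul_eq_mul, ← map_smul, ← h₁, hφ]
  calc m₁ = op a • m₂ := h₁
    _ = op a • op (φ m₂) • m₁ := by rw [← h₂]
    _ = op (φ m₂ * a) • m₁ := by rw [op_mul, mul_smul]
    _ = m₂ := by rw [hfix, ← h₂]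

end

theorem minusLE_antisymm_general (R : Type*) [Ring R] {M : Type*} [AddCommGroup M]
    [Module Rᵐᵒᵖ M] (m₁ m₂ : M)
    (h₁ : MinusLE R m₁ m₂) (h₂ : MinusLE R m₂ m₁) : m₁ = m₂ := by
  obtain ⟨_, h₁₂, -⟩ := h₁.exists_eq_op_smul
  obtain ⟨ψ, h₂₁, hψ⟩ := h₂.exists_eq_op_smul
  exact eq_of_eq_op_smul_of_eq_op_smul ψ h₁₂ h₂₁ hψ.symm

/-- On a regular module, the minus relation is antisymmetric. -/
theorem minusLE_antisymm (R : Type*) [Ring R] {M : Type*} [AddCommGroup M]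
    [Module Rᵐᵒᵖ M] (hM : ∀ m : M, IsRegularElem R m) (m₁ m₂ : M)
    (h₁ : MinusLE R m₁ m₂) (h₂ : MinusLE R m₂ m₁) : m₁ = m₂ :=
  minusLE_antisymm_general R m₁ m₂ h₁ h₂
end

section
/- Let M be a regular right R-module over a Rickart *-ring R. Then the right-star relation ≤* (defined by: m1 ≤* m2 if there exist an idempotent f ∈ S and a self-adjoint idempotent a ∈ R such that l_S(m1) = l_S(f), r_R(m1) = r_R(a), f(m1) = f(m2), and m1·a = m2·a) is a partial order on M. -/
/- A right `R`-module is encoded as a left `Rᵐᵒᵖ`-module: `m · r = MulOpposite.op r • m`.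
Likewise `R` itself is a right `R`-module via `op r • a = a * r`, so the dual
`M* = Hom_R(M, R)` is `M →ₗ[Rᵐᵒᵖ] R` and `S = End_R(M)` is `Module.End Rᵐᵒᵖ M`. -/

open MulOpposite

/-- The right-star relation `m₁ ≤∗ m₂` on a right module over a `*`-ring `R`:
there exist an idempotent `f ∈ S` and a self-adjoint idempotent `a ∈ R` with
`l_S(m₁) = l_S(f)`, `r_R(m₁) = r_R(a)`, `f(m₁) = f(m₂)`, and `m₁·a = m₂·a`. -/
def RightStarLE (R : Type*) [Ring R] [StarRing R] {M : Type*} [AddCommGroup M]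
    [Module Rᵐᵒᵖ M] (m₁ m₂ : M) : Prop :=
  ∃ (f : Module.End Rᵐᵒᵖ M) (a : R), f * f = f ∧ a * a = a ∧ star a = a ∧
    {g : Module.End Rᵐᵒᵖ M | g m₁ = 0} = {g : Module.End Rᵐᵒᵖ M | g * f = 0} ∧
    {r : R | op r • m₁ = (0 : M)} = {x : R | a * x = 0} ∧
    f m₁ = f m₂ ∧ op a • m₁ = op a • m₂

/-!
If `m₁ ≤* m₂` via `f` and `a`, the annihilator conditions force `f m₁ = m₁` and `m₁·a = m₁`,
so `m₁ = f(m₂) = m₂·a`. Hence `r_R(m₂) ⊆ r_R(m₁)` and `l_S(m₂) ⊆ l_S(m₁)`, i.e. `r_R(a') ⊆ r_R(a)`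
and `l_S(f') ⊆ l_S(f)` for the witnesses of a second comparison `m₂ ≤* m₃`; for idempotents this
means `f'f = f` and, the projections being self-adjoint, `a'a = a`. Transitivity follows with the
witnesses `ff'` and `a`, and antisymmetry because projections with equal right annihilators are
equal. Reflexivity is where regularity and the Rickart property enter: if `m = m·φ(m)`, then
`x ↦ m·φ(x)` is an idempotent with the left annihilator of `m`, and
`r_R(m) = r_R(φ(m)) = pR = r_R(1 - p)` for a projection `p`.
-/

section Annihilator

variable {A : Type*} [Ring A]

theorem IsIdempotentElem.mul_eq_left_of_rightAnnihilator_subset {a b : A}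
    (hb : IsIdempotentElem b) (h : {x | b * x = 0} ⊆ {x | a * x = 0}) : a * b = a := by
  have : a * (1 - b) = 0 := h hb.mul_one_sub_self
  rwa [mul_sub, mul_one, sub_eq_zero, eq_comm] at this

theorem IsIdempotentElem.mul_eq_right_of_leftAnnihilator_subset {a b : A}
    (hb : IsIdempotentElem b) (h : {x | x * b = 0} ⊆ {x | x * a = 0}) : b * a = a := by
  have : (1 - b) * a = 0 := h hb.one_sub_mul_self
  rwa [sub_mul, one_mul, sub_eq_zero, eq_comm] at this

theorem IsIdempotentElem.setOf_eq_mul_eq_rightAnnihilator_one_sub {p : A}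
    (hp : IsIdempotentElem p) : {x | ∃ y, x = p * y} = {x | (1 - p) * x = 0} := by
  ext x
  constructor
  · rintro ⟨y, rfl⟩
    rw [Set.mem_ofPred_eq, ← mul_assoc, hp.one_sub_mul_self, zero_mul]
  · intro hx
    rw [Set.mem_ofPred_eq, sub_mul, one_mul, sub_eq_zero] at hx
    exact ⟨x, hx⟩

theorem leftAnnihilator_mul_eq_of_mul_mul_eq {e f : A} (h : e * f * e = e) :
    {x | x * (e * f) = 0} = {x | x * e = 0} := by
  ext x
  constructor
  · intro hx
    rw [Set.mem_ofPred_eq, ← h, ← mul_assoc, hx.out, zero_mul]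
  · intro hx
    rw [Set.mem_ofPred_eq, ← mul_assoc, hx.out, zero_mul]

variable [StarRing A]

theorem IsStarProjection.mul_eq_right_of_rightAnnihilator_subset {a b : A}
    (ha : IsSelfAdjoint a) (hb : IsStarProjection b) (h : {x | b * x = 0} ⊆ {x | a * x = 0}) :
    b * a = a := by
  simpa [ha.star_eq, hb.isSelfAdjoint.star_eq] using
    congr(star $(hb.isIdempotentElem.mul_eq_left_of_rightAnnihilator_subset h))

theorem IsStarProjection.eq_of_rightAnnihilator_eq {a b : A} (ha : IsStarProjection a)
    (hb : IsStarProjection b) (h : {x | a * x = 0} = {x | b * x = 0}) : a = b :=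
  calc a = b * a := (hb.mul_eq_right_of_rightAnnihilator_subset ha.isSelfAdjoint h.ge).symm
    _ = b := ha.isIdempotentElem.mul_eq_left_of_rightAnnihilator_subset h.le

end Annihilator

section Module

variable {R : Type*} [Ring R] {M : Type*} [AddCommGroup M] [Module Rᵐᵒᵖ M]

theorem op_smul_eq_self_of_rightAnnihilator_eq {m : M} {a : R} (ha : IsIdempotentElem a)
    (h : {r : R | op r • m = 0} = {x | a * x = 0}) : op a • m = m := by
  have : op (1 - a) • m = 0 := h.ge ha.mul_one_sub_self
  rwa [op_sub, op_one, sub_smul, one_smul, sub_eq_zero, eq_comm] at this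

theorem apply_eq_self_of_leftAnnihilator_eq {m : M} {f : Module.End Rᵐᵒᵖ M}
    (hf : IsIdempotentElem f) (h : {g : Module.End Rᵐᵒᵖ M | g m = 0} = {g | g * f = 0}) :
    f m = m := by
  have : (1 - f) m = 0 := h.ge hf.one_sub_mul_self
  rwa [LinearMap.sub_apply, Module.End.one_apply, sub_eq_zero, eq_comm] at this

def opSmulRight (φ : M →ₗ[Rᵐᵒᵖ] R) (m : M) : Module.End Rᵐᵒᵖ M where
  toFun x := op (φ x) • m
  map_add' x y := by rw [map_add, op_add, add_smul]
  map_smul' r x := by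
    rw [map_smul, RingHom.id_apply, ← op_unop r, op_smul_eq_mul, op_mul, op_unop, mul_smul]

@[simp]
theorem opSmulRight_apply (φ : M →ₗ[Rᵐᵒᵖ] R) (m x : M) : opSmulRight φ m x = op (φ x) • m :=
  rfl

section Regular

variable {φ : M →ₗ[Rᵐᵒᵖ] R} {m : M}

theorem opSmulRight_apply_self (hφ : m = op (φ m) • m) : opSmulRight φ m m = m :=
  hφ.symm

theorem isIdempotentElem_opSmulRight (hφ : m = op (φ m) • m) :
    IsIdempotentElem (opSmulRight φ m) := by
  ext x
  rw [Module.End.mul_apply, opSmulRight_apply _ _ x, map_smul, opSmulRight_apply_self hφ]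

theorem leftAnnihilator_eq_opSmulRight (hφ : m = op (φ m) • m) :
    {g : Module.End Rᵐᵒᵖ M | g m = 0} = {g | g * opSmulRight φ m = 0} := by
  ext g
  constructor
  · intro hg
    ext x
    rw [Module.End.mul_apply, opSmulRight_apply, map_smul, hg.out, smul_zero,
      LinearMap.zero_apply]
  · intro hg
    rw [Set.mem_ofPred_eq, ← opSmulRight_apply_self hφ, ← Module.End.mul_apply, hg.out,
      LinearMap.zero_apply]

theorem rightAnnihilator_eq_of_eq_op_smul (hφ : m = op (φ m) • m) :
    {r : R | op r • m = 0} = {x | φ m * x = 0} := by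
  ext r
  constructor
  · intro hr
    simpa using congr(φ $(hr.out))
  · intro hr
    rw [Set.mem_ofPred_eq, hφ, ← mul_smul, ← op_mul, hr.out, op_zero, zero_smul]

end Regular

variable [StarRing R]

theorem rightStarLE_refl_of_isRegularElem {m : M} (hm : IsRegularElem R m)
    (hR : ∀ b : R, ∃ p : R, p * p = p ∧ star p = p ∧
      {x : R | b * x = 0} = {x : R | ∃ y : R, x = p * y}) :
    RightStarLE R m m := by
  obtain ⟨φ, hφ⟩ := hm
  obtain ⟨p, hp, hps, hpR⟩ := hR (φ m)
  have hq : IsStarProjection (1 - p) := IsStarProjection.one_sub ⟨hp, hps⟩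
  refine ⟨opSmulRight φ m, 1 - p, isIdempotentElem_opSmulRight hφ, hq.isIdempotentElem,
    hq.isSelfAdjoint, leftAnnihilator_eq_opSmulRight hφ, ?_, rfl, rfl⟩
  rw [rightAnnihilator_eq_of_eq_op_smul hφ, hpR,
    IsIdempotentElem.setOf_eq_mul_eq_rightAnnihilator_one_sub hp]

namespace RightStarLE

variable {m₁ m₂ m₃ : M}

theorem exists_eq_apply (h : RightStarLE R m₁ m₂) : ∃ f : Module.End Rᵐᵒᵖ M, m₁ = f m₂ := by
  obtain ⟨f, -, hf, -, -, hlf, -, hfm, -⟩ := h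
  exact ⟨f, (apply_eq_self_of_leftAnnihilator_eq hf hlf).symm.trans hfm⟩

theorem exists_eq_op_smul (h : RightStarLE R m₁ m₂) : ∃ a : R, m₁ = op a • m₂ := by
  obtain ⟨-, a, -, ha, -, -, hra, -, ham⟩ := h
  exact ⟨a, (op_smul_eq_self_of_rightAnnihilator_eq ha hra).symm.trans ham⟩

theorem rightAnnihilator_subset (h : RightStarLE R m₁ m₂) :
    {r : R | op r • m₂ = 0} ⊆ {r | op r • m₁ = 0} := by
  obtain ⟨f, rfl⟩ := h.exists_eq_apply
  intro r hr
  rw [Set.mem_ofPred_eq, ← map_smul, hr.out, map_zero]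

theorem leftAnnihilator_subset (h : RightStarLE R m₁ m₂) :
    {g : Module.End Rᵐᵒᵖ M | g m₂ = 0} ⊆ {g | g m₁ = 0} := by
  obtain ⟨a, rfl⟩ := h.exists_eq_op_smul
  intro g hg
  rw [Set.mem_ofPred_eq, map_smul, hg.out, smul_zero]

theorem antisymm (h₁₂ : RightStarLE R m₁ m₂) (h₂₁ : RightStarLE R m₂ m₁) : m₁ = m₂ := by
  have hann := h₂₁.rightAnnihilator_subset.antisymm h₁₂.rightAnnihilator_subset
  obtain ⟨-, a, -, ha, has, -, hra, -, ham⟩ := h₁₂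
  obtain ⟨-, b, -, hb, hbs, -, hrb, -, -⟩ := h₂₁
  have hab : a = b := IsStarProjection.eq_of_rightAnnihilator_eq ⟨ha, has⟩ ⟨hb, hbs⟩
    (hra.symm.trans (hann.trans hrb))
  calc m₁ = op a • m₁ := (op_smul_eq_self_of_rightAnnihilator_eq ha hra).symm
    _ = op b • m₂ := hab ▸ ham
    _ = m₂ := op_smul_eq_self_of_rightAnnihilator_eq hb hrb

theorem trans (h₁₂ : RightStarLE R m₁ m₂) (h₂₃ : RightStarLE R m₂ m₃) : RightStarLE R m₁ m₃ := by
  have hl := h₁₂.leftAnnihilator_subset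
  have hr := h₁₂.rightAnnihilator_subset
  obtain ⟨f, a, hf, ha, has, hlf, hra, hfm, ham⟩ := h₁₂
  obtain ⟨f', a', hf', ha', ha's, hlf', hra', hfm', ham'⟩ := h₂₃
  rw [hlf, hlf'] at hl
  rw [hra, hra'] at hr
  have hf'f : f' * f = f := IsIdempotentElem.mul_eq_right_of_leftAnnihilator_subset hf' hl
  have ha'a : a' * a = a :=
    IsStarProjection.mul_eq_right_of_rightAnnihilator_subset has ⟨ha', ha's⟩ hr
  have hf'm₁ : f' m₁ = m₁ := by
    rw [← apply_eq_self_of_leftAnnihilator_eq hf hlf, ← Module.End.mul_apply, hf'f]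
  refine ⟨f * f', a, ?_, ha, has, ?_, hra, ?_, ?_⟩
  · calc f * f' * (f * f') = f * (f' * f) * f' := by simp only [mul_assoc]
      _ = f * f' := by rw [hf'f, hf]
  · rw [hlf, leftAnnihilator_mul_eq_of_mul_mul_eq (by rw [mul_assoc, hf'f, hf])]
  · calc (f * f') m₁ = f m₂ := by rw [Module.End.mul_apply, hf'm₁, hfm]
      _ = f (f' m₃) := by rw [← hfm', apply_eq_self_of_leftAnnihilator_eq hf' hlf']
  · calc op a • m₁ = op a • op a' • m₂ := by rw [ham, ← mul_smul, ← op_mul, ha'a]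
      _ = op a • m₃ := by rw [ham', ← mul_smul, ← op_mul, ha'a]

end RightStarLE

end Module

/-- If `M` is a regular right module over a Rickart `*`-ring `R`, then
the right-star relation is a partial order on `M`. -/
theorem rightStarLE_isPartialOrder (R : Type*) [Ring R] [StarRing R] {M : Type*}
    [AddCommGroup M] [Module Rᵐᵒᵖ M]
    (hM : ∀ m : M, IsRegularElem R m)
    (hRickart : ∀ b : R,
      (∃ p : R, p * p = p ∧ star p = p ∧
        {x : R | b * x = 0} = {x : R | ∃ y : R, x = p * y}) ∧
      (∃ q : R, q * q = q ∧ star q = q ∧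
        {x : R | x * b = 0} = {x : R | ∃ y : R, x = y * q})) :
    (∀ m : M, RightStarLE R m m) ∧
    (∀ m₁ m₂ : M, RightStarLE R m₁ m₂ → RightStarLE R m₂ m₁ → m₁ = m₂) ∧
    (∀ m₁ m₂ m₃ : M, RightStarLE R m₁ m₂ → RightStarLE R m₂ m₃ → RightStarLE R m₁ m₃) :=
  ⟨fun m ↦ rightStarLE_refl_of_isRegularElem (hM m) fun b ↦ (hRickart b).1,
    fun _ _ ↦ RightStarLE.antisymm, fun _ _ _ ↦ RightStarLE.trans⟩
end

section
/- Let M be a regular right R-module, m1, m2 ∈ M, and g ∈ S = End_R(M) invertible. Then m1 ≤⁻ m2 if and only if g(m1) ≤⁻ g(m2). -/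
/- A right `R`-module is encoded as a left `Rᵐᵒᵖ`-module: `m · r = MulOpposite.op r • m`.
Likewise `R` itself is a right `R`-module via `op r • a = a * r`, so the dual
`M* = Hom_R(M, R)` is `M →ₗ[Rᵐᵒᵖ] R` and `S = End_R(M)` is `Module.End Rᵐᵒᵖ M`. -/

open MulOpposite

section MinusLE

variable {R : Type*} [Ring R] {M N : Type*} [AddCommGroup M] [Module Rᵐᵒᵖ M]
  [AddCommGroup N] [Module Rᵐᵒᵖ N]

theorem MinusLE.map_linearEquiv {m₁ m₂ : M} (h : MinusLE R m₁ m₂) (e : M ≃ₗ[Rᵐᵒᵖ] N) :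
    MinusLE R (e m₁) (e m₂) := by
  obtain ⟨φ, hreg, hsmul, heq⟩ := h
  refine ⟨φ ∘ₗ e.symm.toLinearMap, ?_, fun y => ?_, ?_⟩
  · simp only [LinearMap.comp_apply, LinearEquiv.coe_coe, LinearEquiv.symm_apply_apply,
      ← map_smul, ← hreg]
  · simp only [LinearMap.comp_apply, LinearEquiv.coe_coe, ← map_smul, hsmul]
  · simp only [LinearMap.comp_apply, LinearEquiv.coe_coe, LinearEquiv.symm_apply_apply, heq]

theorem minusLE_map_linearEquiv_iff {m₁ m₂ : M} (e : M ≃ₗ[Rᵐᵒᵖ] N) :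
    MinusLE R (e m₁) (e m₂) ↔ MinusLE R m₁ m₂ :=
  ⟨fun h => by simpa only [LinearEquiv.symm_apply_apply] using h.map_linearEquiv e.symm, fun h => h.map_linearEquiv e⟩

end MinusLE

theorem minusLE_iff_unit_smul_left_general (R : Type*) [Ring R] {M : Type*} [AddCommGroup M]
    [Module Rᵐᵒᵖ M] (m₁ m₂ : M)
    (g : Module.End Rᵐᵒᵖ M) (hg : IsUnit g) :
    MinusLE R m₁ m₂ ↔ MinusLE R (g m₁) (g m₂) :=
  (minusLE_map_linearEquiv_iff (.ofBijective g ((Module.End.isUnit_iff g).mp hg))).symm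

/-- On a regular module, `m₁ ≤⁻ m₂` iff `g(m₁) ≤⁻ g(m₂)` for every
invertible `g ∈ S = End_R(M)`. -/
theorem minusLE_iff_unit_smul_left (R : Type*) [Ring R] {M : Type*} [AddCommGroup M]
    [Module Rᵐᵒᵖ M] (hM : ∀ m : M, IsRegularElem R m) (m₁ m₂ : M)
    (g : Module.End Rᵐᵒᵖ M) (hg : IsUnit g) :
    MinusLE R m₁ m₂ ↔ MinusLE R (g m₁) (g m₂) :=
  minusLE_iff_unit_smul_left_general R m₁ m₂ g hg
end

section
/- Let M be a regular right R-module and m1, m2 ∈ M. Then m1 ≤_J m2 (i.e., there exist an idempotent f ∈ S and an idempotent a ∈ R with m1 = f(m2) = m2·a) if and only if m1 ≤⁻ m2. -/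
/- A right `R`-module is encoded as a left `Rᵐᵒᵖ`-module: `m · r = MulOpposite.op r • m`.
Likewise `R` itself is a right `R`-module via `op r • a = a * r`, so the dual
`M* = Hom_R(M, R)` is `M →ₗ[Rᵐᵒᵖ] R` and `S = End_R(M)` is `Module.End Rᵐᵒᵖ M`. -/

open MulOpposite

/-- The Jones relation: `m₁ ≤_J m₂` iff there exist idempotents `f ∈ S` and `a ∈ R`
such that `m₁ = f(m₂) = m₂·a`. -/
def JonesLE (R : Type*) [Ring R] {M : Type*} [AddCommGroup M] [Module Rᵐᵒᵖ M]
    (m₁ m₂ : M) : Prop :=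
  ∃ (f : Module.End Rᵐᵒᵖ M) (a : R), f * f = f ∧ a * a = a ∧
    m₁ = f m₂ ∧ m₁ = op a • m₂

/-! For `m₁ ≤⁻ m₂` witnessed by `φ`, the idempotents `x ↦ m₁·φ(x)` and `φ(m₁)` witness
`m₁ ≤_J m₂`. Conversely, if `m₁ = f(m₂) = m₂·a` and `m₁ = m₁·ψ(m₁)` by regularity, then
`φ := a·(ψ ∘ f)` witnesses `m₁ ≤⁻ m₂`: `f` fixes `m₁`, and `a` fixes `m₁` and identifies it
with `m₂` on the right. -/

section

variable {R : Type*} [Ring R] {M : Type*} [AddCommGroup M] [Module Rᵐᵒᵖ M]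

def smulDualEnd (φ : M →ₗ[Rᵐᵒᵖ] R) (m : M) : Module.End Rᵐᵒᵖ M where
  toFun x := op (φ x) • m
  map_add' x y := by simp only [map_add, op_add, add_smul]
  map_smul' r x := by
    rw [map_smul, smul_eq_mul_unop, op_mul, op_unop, mul_smul, RingHom.id_apply]

@[simp]
theorem smulDualEnd_apply (φ : M →ₗ[Rᵐᵒᵖ] R) (m x : M) :
    smulDualEnd φ m x = op (φ x) • m :=
  rfl

theorem isIdempotentElem_apply_self_of_eq_smul {φ : M →ₗ[Rᵐᵒᵖ] R} {m : M}
    (h : m = op (φ m) • m) : IsIdempotentElem (φ m) := by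
  have := congrArg φ h
  rwa [map_smul, smul_eq_mul_unop, unop_op, eq_comm] at this

theorem isIdempotentElem_smulDualEnd {φ : M →ₗ[Rᵐᵒᵖ] R} {m : M}
    (h : m = op (φ m) • m) : IsIdempotentElem (smulDualEnd φ m) := by
  ext x
  rw [Module.End.mul_apply, smulDualEnd_apply, smulDualEnd_apply, map_smul, smul_eq_mul_unop,
    unop_op, op_mul, mul_smul, ← h]

theorem MinusLE.jonesLE {m₁ m₂ : M} (h : MinusLE R m₁ m₂) : JonesLE R m₁ m₂ := by
  obtain ⟨φ, hreg, hsmul, happ⟩ := h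
  refine ⟨smulDualEnd φ m₁, φ m₁, isIdempotentElem_smulDualEnd hreg,
    isIdempotentElem_apply_self_of_eq_smul hreg, ?_, ?_⟩
  · rwa [smulDualEnd_apply, ← happ]
  · rwa [← hsmul]

theorem JonesLE.minusLE {m₁ m₂ : M} (hreg : IsRegularElem R m₁) (h : JonesLE R m₁ m₂) :
    MinusLE R m₁ m₂ := by
  obtain ⟨f, a, hf, ha, hfm₂, hm₂a⟩ := h
  obtain ⟨ψ, hψ⟩ := hreg
  have hfm₁ : f m₁ = m₁ := by rw [hfm₂, ← Module.End.mul_apply, hf]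
  have hm₁a : op a • m₁ = m₁ := by rw [hm₂a, smul_smul, ← op_mul, ha]
  have hsmul_a : op a • m₁ = op a • m₂ := by rw [hm₁a, hm₂a]
  refine ⟨a • (ψ ∘ₗ f), ?_, fun x => ?_, ?_⟩
  · rw [LinearMap.smul_apply, LinearMap.comp_apply, hfm₁, smul_eq_mul, op_mul, mul_smul, hm₁a]
    exact hψ
  · rw [LinearMap.smul_apply, smul_eq_mul, op_mul, mul_smul, mul_smul, hsmul_a]
  · rw [LinearMap.smul_apply, LinearMap.smul_apply, LinearMap.comp_apply, LinearMap.comp_apply,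
      hfm₁, ← hfm₂]

end

/-- On a regular module, `m₁ ≤_J m₂` iff `m₁ ≤⁻ m₂`. -/
theorem jonesLE_iff_minusLE (R : Type*) [Ring R] {M : Type*} [AddCommGroup M]
    [Module Rᵐᵒᵖ M] (hM : ∀ m : M, IsRegularElem R m) (m₁ m₂ : M) :
    JonesLE R m₁ m₂ ↔ MinusLE R m₁ m₂ :=
  ⟨JonesLE.minusLE (hM m₁), MinusLE.jonesLE⟩
end

section
/- Let M be a regular right R-module and m1, m2 ∈ M. Then m1 ≤⁻ m2 if and only if m1 ≤_M m2 (i.e., there exist f ∈ S and a ∈ R with m1 = m2·a = f(m2) and m1 = f(m1)). -/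
/- A right `R`-module is encoded as a left `Rᵐᵒᵖ`-module: `m · r = MulOpposite.op r • m`.
Likewise `R` itself is a right `R`-module via `op r • a = a * r`, so the dual
`M* = Hom_R(M, R)` is `M →ₗ[Rᵐᵒᵖ] R` and `S = End_R(M)` is `Module.End Rᵐᵒᵖ M`. -/

open MulOpposite

/-- The Mitsch relation: `m₁ ≤_M m₂` iff there exist `f ∈ S` and `a ∈ R` such that
`m₁ = m₂·a = f(m₂)` and `m₁ = f(m₁)`. -/
def MitschLE (R : Type*) [Ring R] {M : Type*} [AddCommGroup M] [Module Rᵐᵒᵖ M]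
    (m₁ m₂ : M) : Prop :=
  ∃ (f : Module.End Rᵐᵒᵖ M) (a : R),
    m₁ = op a • m₂ ∧ m₁ = f m₂ ∧ m₁ = f m₁

/-! For `≤⁻ ⇒ ≤_M`, a witness `φ` of `m₁ ≤⁻ m₂` yields the endomorphism `x ↦ m₁·φ(x)` and the
scalar `φ(m₁)`. Conversely, from `m₁ = m₂·a = f(m₂) = f(m₁)` one gets
`m₁·a = f(m₂)·a = f(m₂·a) = f(m₁) = m₁`, and if `m₁ = m₁·ψ(m₁)` then `φ = a·(ψ ∘ f)` witnesses
`m₁ ≤⁻ m₂`: right multiplication by `a` identifies `m₁` and `m₂`, and `f` identifies `φ(m₁)`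
and `φ(m₂)`. -/

section

variable {R : Type*} [Ring R] {M : Type*} [AddCommGroup M] [Module Rᵐᵒᵖ M]

def smulRightOp (φ : M →ₗ[Rᵐᵒᵖ] R) (m : M) : Module.End Rᵐᵒᵖ M where
  toFun x := op (φ x) • m
  map_add' x y := by simp only [map_add, op_add, add_smul]
  map_smul' c x := by
    induction c using MulOpposite.rec' with
    | h c => simp only [map_smul, smul_eq_mul_unop, unop_op, op_mul, mul_smul, RingHom.id_apply]

@[simp]
theorem smulRightOp_apply (φ : M →ₗ[Rᵐᵒᵖ] R) (m x : M) : smulRightOp φ m x = op (φ x) • m :=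
  rfl

theorem mitschLE_of_minusLE {m₁ m₂ : M} (h : MinusLE R m₁ m₂) : MitschLE R m₁ m₂ := by
  obtain ⟨φ, hφ, hφx, hφm⟩ := h
  refine ⟨smulRightOp φ m₁, φ m₁, ?_, ?_, ?_⟩
  · rw [← hφx, ← hφ]
  · rw [smulRightOp_apply, ← hφm, ← hφ]
  · exact hφ

theorem op_smul_eq_self_of_mitschLE {m₁ m₂ : M} {f : Module.End Rᵐᵒᵖ M} {a : R}
    (ha : m₁ = op a • m₂) (hf₂ : m₁ = f m₂) (hf₁ : m₁ = f m₁) : op a • m₁ = m₁ :=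
  calc op a • m₁ = f (op a • m₂) := by rw [map_smul, ← hf₂]
    _ = m₁ := by rw [← ha, ← hf₁]

theorem minusLE_of_mitschLE {m₁ m₂ : M} (hreg : IsRegularElem R m₁) (h : MitschLE R m₁ m₂) :
    MinusLE R m₁ m₂ := by
  obtain ⟨f, a, ha, hf₂, hf₁⟩ := h
  obtain ⟨ψ, hψ⟩ := hreg
  have hm₁a : op a • m₁ = m₁ := op_smul_eq_self_of_mitschLE ha hf₂ hf₁
  have hφ (x : M) : (a • ψ ∘ₗ f) x = a * ψ (f x) := rfl
  refine ⟨a • ψ ∘ₗ f, ?_, fun x => ?_, ?_⟩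
  · rw [hφ, ← hf₁, op_mul, mul_smul, hm₁a, ← hψ]
  · rw [hφ, op_mul, mul_smul, mul_smul, hm₁a, ← ha]
  · rw [hφ, hφ, ← hf₁, ← hf₂]

end

/-- On a regular module, `m₁ ≤⁻ m₂` iff `m₁ ≤_M m₂`. -/
theorem minusLE_iff_mitschLE (R : Type*) [Ring R] {M : Type*} [AddCommGroup M]
    [Module Rᵐᵒᵖ M] (hM : ∀ m : M, IsRegularElem R m) (m₁ m₂ : M) :
    MinusLE R m₁ m₂ ↔ MitschLE R m₁ m₂ :=
  ⟨mitschLE_of_minusLE, minusLE_of_mitschLE (hM m₁)⟩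
end

section
/- Let M be a regular right R-module and m1, m2 ∈ M. Then m1 ≤⁻ m2 if and only if there exist g ∈ S and b ∈ R such that m1 = m2·b = g(m2) and m1 = m1·b. -/
/- A right `R`-module is encoded as a left `Rᵐᵒᵖ`-module: `m · r = MulOpposite.op r • m`.
Likewise `R` itself is a right `R`-module via `op r • a = a * r`, so the dual
`M* = Hom_R(M, R)` is `M →ₗ[Rᵐᵒᵖ] R` and `S = End_R(M)` is `Module.End Rᵐᵒᵖ M`. -/

open MulOpposite

/-! `m₁ ≤⁻ m₂` via `φ` gives `g = m₁·φ(-)` and `b = φ(m₁)`. Conversely, if `ψ` witnesses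
the regularity of `m₁`, then `b·ψ(g(-))` witnesses `m₁ ≤⁻ m₂`: the identities `m₁ = m₁·b = m₂·b`
absorb the factor `b`, and `g` fixes `m₁` because `g(m₁) = g(m₂)·b = m₁·b`. -/

section

variable {R : Type*} [Ring R] {M : Type*} [AddCommGroup M] [Module Rᵐᵒᵖ M]

def dualSMulRight (φ : M →ₗ[Rᵐᵒᵖ] R) (m : M) : Module.End Rᵐᵒᵖ M where
  toFun x := op (φ x) • m
  map_add' x y := by simp only [map_add, op_add, add_smul]
  map_smul' r x := by
    simp only [map_smul, smul_eq_mul_unop, op_mul, op_unop, mul_smul, RingHom.id_apply]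

@[simp]
theorem dualSMulRight_apply (φ : M →ₗ[Rᵐᵒᵖ] R) (m x : M) :
    dualSMulRight φ m x = op (φ x) • m :=
  rfl

theorem MinusLE.exists_right_fixed {m₁ m₂ : M} (h : MinusLE R m₁ m₂) :
    ∃ (g : Module.End Rᵐᵒᵖ M) (b : R), m₁ = op b • m₂ ∧ m₁ = g m₂ ∧ m₁ = op b • m₁ := by
  obtain ⟨φ, hfix, hsmul, hφ⟩ := h
  refine ⟨dualSMulRight φ m₁, φ m₁, ?_, ?_, hfix⟩
  · rw [← hsmul, ← hfix]
  · rw [dualSMulRight_apply, ← hφ, ← hfix]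

theorem minusLE_of_right_fixed {m₁ m₂ : M} {g : Module.End Rᵐᵒᵖ M} {b : R}
    (hreg : IsRegularElem R m₁) (hb : m₁ = op b • m₂) (hg : m₁ = g m₂) (hfix : m₁ = op b • m₁) :
    MinusLE R m₁ m₂ := by
  obtain ⟨ψ, hψ⟩ := hreg
  have hg_fix : g m₁ = m₁ := by rw [hb, map_smul, ← hg, ← hb, ← hfix]
  have hsmul : ∀ x, op ((b • ψ ∘ₗ g) x) • m₁ = op (ψ (g x)) • m₁ := fun x => by
    rw [LinearMap.smul_apply, LinearMap.comp_apply, smul_eq_mul, op_mul, mul_smul, ← hfix]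
  refine ⟨b • ψ ∘ₗ g, ?_, fun x => ?_, ?_⟩
  · rwa [hsmul, hg_fix]
  · rw [hsmul, LinearMap.smul_apply, LinearMap.comp_apply, smul_eq_mul, op_mul, mul_smul,
      ← hb]
  · simp only [LinearMap.smul_apply, LinearMap.comp_apply, hg_fix, ← hg]

end

/-- On a regular module, `m₁ ≤⁻ m₂` iff there exist `g ∈ S` and
`b ∈ R` such that `m₁ = m₂·b = g(m₂)` and `m₁ = m₁·b`. -/
theorem minusLE_iff_exists_right_fixed (R : Type*) [Ring R] {M : Type*}
    [AddCommGroup M] [Module Rᵐᵒᵖ M] (hM : ∀ m : M, IsRegularElem R m) (m₁ m₂ : M) :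
    MinusLE R m₁ m₂ ↔
      ∃ (g : Module.End Rᵐᵒᵖ M) (b : R),
        m₁ = op b • m₂ ∧ m₁ = g m₂ ∧ m₁ = op b • m₁ := by
  refine ⟨MinusLE.exists_right_fixed, ?_⟩
  rintro ⟨g, b, hb, hg, hfix⟩
  exact minusLE_of_right_fixed (hM m₁) hb hg hfix
end

section
/- Let M be a right R-module and m1, m2 ∈ M with both m1 and m2 regular. Then m1 ≤⁻ m2 if and only if m2R = m1R ⊕ (m2 − m1)R, i.e., m2R = m1R + (m2 − m1)R and m1R ∩ (m2 − m1)R = {0}. -/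
/- A right `R`-module is encoded as a left `Rᵐᵒᵖ`-module: `m · r = MulOpposite.op r • m`.
Likewise `R` itself is a right `R`-module via `op r • a = a * r`, so the dual
`M* = Hom_R(M, R)` is `M →ₗ[Rᵐᵒᵖ] R` and `S = End_R(M)` is `Module.End Rᵐᵒᵖ M`. -/

open MulOpposite

/-! If `m₁ ≤⁻ m₂` via `φ`, then `m₁ = m₂·φ(m₁) ∈ m₂R`, and every `v ∈ m₁R ∩ (m₂ - m₁)R`
satisfies `v = m₁·φ(v)` with `φ(v) = 0`.

Conversely, if `m₂ = m₂·χ(m₂)`, then `y ↦ m₂·χ(y)` is the identity on `m₂R`, so `y ↦ m₁·χ(y)`,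
which differs from it by an element of `(m₂ - m₁)R` and lands in `m₁R`, is the projection of
`m₂R = m₁R ⊕ (m₂ - m₁)R` onto `m₁R`. Hence `φ(x) := χ(m₁·χ(x)) = χ(m₁)χ(x)` witnesses
`m₁ ≤⁻ m₂`. -/

open Submodule

theorem span_singleton_eq_sup_span_singleton_sub_iff {S M : Type*} [Ring S] [AddCommGroup M]
    [Module S M] {m₁ m₂ : M} :
    span S {m₂} = span S {m₁} ⊔ span S {m₂ - m₁} ↔ m₁ ∈ span S {m₂} := by
  refine ⟨fun h => h ▸ mem_sup_left (mem_span_singleton_self m₁), fun h => le_antisymm ?_ ?_⟩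
  · have hsum : m₁ + (m₂ - m₁) ∈ span S {m₁} ⊔ span S {m₂ - m₁} :=
      add_mem (mem_sup_left (mem_span_singleton_self m₁))
        (mem_sup_right (mem_span_singleton_self (m₂ - m₁)))
    rwa [add_sub_cancel, ← span_singleton_le_iff_mem] at hsum
  · rw [sup_le_iff, span_singleton_le_iff_mem, span_singleton_le_iff_mem]
    exact ⟨h, sub_mem (mem_span_singleton_self m₂) h⟩

section

variable {R : Type*} [Ring R] {M : Type*} [AddCommGroup M] [Module Rᵐᵒᵖ M]

theorem op_apply_smul_eq_of_mem_span_singleton {φ : M →ₗ[Rᵐᵒᵖ] R} {m y : M}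
    (hφ : m = op (φ m) • m) (hy : y ∈ span Rᵐᵒᵖ {m}) : op (φ y) • m = y := by
  obtain ⟨c, rfl⟩ := mem_span_singleton.mp hy
  rw [map_smul, ← op_unop c, op_smul_eq_mul, op_mul, op_unop, mul_smul, ← hφ]

variable {m₁ m₂ : M}

theorem MinusLE.mem_span_singleton (h : MinusLE R m₁ m₂) : m₁ ∈ span Rᵐᵒᵖ {m₂} := by
  obtain ⟨φ, hφ, hφm, -⟩ := h
  exact Submodule.mem_span_singleton.mpr ⟨op (φ m₁), ((hφm m₁).symm.trans hφ.symm)⟩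

theorem MinusLE.disjoint (h : MinusLE R m₁ m₂) :
    Disjoint (span Rᵐᵒᵖ {m₁}) (span Rᵐᵒᵖ {m₂ - m₁}) := by
  obtain ⟨φ, hφ, -, hφeq⟩ := h
  refine disjoint_def.mpr fun v hv₁ hv => ?_
  have hφv : φ v = 0 := by
    obtain ⟨c, rfl⟩ := Submodule.mem_span_singleton.mp hv
    rw [map_smul, map_sub, hφeq, sub_self, smul_zero]
  rw [← op_apply_smul_eq_of_mem_span_singleton hφ hv₁, hφv, op_zero, zero_smul]

theorem minusLE_of_mem_span_singleton_of_disjoint (h₂ : IsRegularElem R m₂)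
    (hm : m₁ ∈ span Rᵐᵒᵖ {m₂}) (hd : Disjoint (span Rᵐᵒᵖ {m₁}) (span Rᵐᵒᵖ {m₂ - m₁})) :
    MinusLE R m₁ m₂ := by
  obtain ⟨χ, hχ⟩ := h₂
  have hle : span Rᵐᵒᵖ {m₁} ≤ span Rᵐᵒᵖ {m₂} := (span_singleton_le_iff_mem _ _).mpr hm
  have hsub : ∀ y ∈ span Rᵐᵒᵖ {m₂}, op (χ y) • m₁ - y ∈ span Rᵐᵒᵖ {m₂ - m₁} := by
    intro y hy
    nth_rw 2 [← op_apply_smul_eq_of_mem_span_singleton hχ hy]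
    rw [← smul_sub]
    refine smul_mem _ _ ?_
    rw [← Submodule.neg_mem_iff, neg_sub]
    exact mem_span_singleton_self _
  have hproj : ∀ y ∈ span Rᵐᵒᵖ {m₁}, op (χ y) • m₁ = y := fun y hy =>
    sub_eq_zero.mp <| disjoint_def.mp hd _
      (sub_mem (smul_mem _ _ (mem_span_singleton_self m₁)) hy) (hsub y (hle hy))
  have hproj_m₂ : op (χ m₂) • m₁ = m₁ := by
    refine sub_eq_zero.mp <| disjoint_def.mp hd _
      (sub_mem (smul_mem _ _ (mem_span_singleton_self m₁)) (mem_span_singleton_self m₁)) ?_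
    have h : op (χ m₂) • m₁ - m₂ + (m₂ - m₁) ∈ span Rᵐᵒᵖ {m₂ - m₁} :=
      add_mem (hsub m₂ (mem_span_singleton_self m₂)) (mem_span_singleton_self (m₂ - m₁))
    rwa [sub_add_sub_cancel] at h
  have hχmul : ∀ x, χ (op (χ x) • m₁) = χ m₁ * χ x := fun x => by
    rw [map_smul, op_smul_eq_mul]
  refine ⟨LinearMap.mulLeft Rᵐᵒᵖ (χ m₁) ∘ₗ χ, ?_, fun x => ?_, ?_⟩
  all_goals simp only [LinearMap.comp_apply, LinearMap.mulLeft_apply, ← hχmul]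
  · rw [hproj m₁ (mem_span_singleton_self m₁), hproj m₁ (mem_span_singleton_self m₁)]
  · have hx : op (χ x) • m₁ ∈ span Rᵐᵒᵖ {m₁} := smul_mem _ _ (mem_span_singleton_self m₁)
    rw [hproj _ hx, op_apply_smul_eq_of_mem_span_singleton hχ (hle hx)]
  · rw [hproj m₁ (mem_span_singleton_self m₁), hproj_m₂]

end

theorem minusLE_iff_directSum_general (R : Type*) [Ring R] {M : Type*} [AddCommGroup M]
    [Module Rᵐᵒᵖ M] (m₁ m₂ : M)
    (h₂ : IsRegularElem R m₂) :
    MinusLE R m₁ m₂ ↔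
      (Submodule.span Rᵐᵒᵖ {m₂} =
        Submodule.span Rᵐᵒᵖ {m₁} ⊔ Submodule.span Rᵐᵒᵖ {m₂ - m₁} ∧
       Submodule.span Rᵐᵒᵖ {m₁} ⊓ Submodule.span Rᵐᵒᵖ {m₂ - m₁} = ⊥) := by
  rw [span_singleton_eq_sup_span_singleton_sub_iff, ← disjoint_iff]
  exact ⟨fun h => ⟨h.mem_span_singleton, h.disjoint⟩,
    fun ⟨hm, hd⟩ => minusLE_of_mem_span_singleton_of_disjoint h₂ hm hd⟩

/-- For regular elements `m₁, m₂` of a right `R`-module `M`,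
`m₁ ≤⁻ m₂` iff `m₂R = m₁R ⊕ (m₂ - m₁)R`, i.e. `m₂R = m₁R + (m₂ - m₁)R` and
`m₁R ∩ (m₂ - m₁)R = {0}`. -/
theorem minusLE_iff_directSum (R : Type*) [Ring R] {M : Type*} [AddCommGroup M]
    [Module Rᵐᵒᵖ M] (m₁ m₂ : M)
    (h₁ : IsRegularElem R m₁) (h₂ : IsRegularElem R m₂) :
    MinusLE R m₁ m₂ ↔
      (Submodule.span Rᵐᵒᵖ {m₂} =
        Submodule.span Rᵐᵒᵖ {m₁} ⊔ Submodule.span Rᵐᵒᵖ {m₂ - m₁} ∧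
       Submodule.span Rᵐᵒᵖ {m₁} ⊓ Submodule.span Rᵐᵒᵖ {m₂ - m₁} = ⊥) :=
  minusLE_iff_directSum_general R m₁ m₂ h₂
end
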